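/- For every red-black tree t over the natural numbers with black height n, the parallel span of the recursive Sum algorithm on t is at most 1 + 2n, and if the root of t is colored black the span is at most 2n. Consequently, the span of Sum(t) is at most 1 + 2⌈log₂(1 + |t|)⌉, where |t| is the number of internal nodes of t. -/
import Mathlib


/-- Node colors for red-black trees. -/
inductive Color where
  | red : Color
  | black : Color
deriving DecidableEq

/-- Plain binary trees with colored nodes. -/
inductive RBTree (α : Type) where
  | leaf : RBTree α
  | node : Color → RBTree α → α → RBTree α → RBTree α

namespace RBTree

variable {α : Type}

/-- The black height of a tree (computed along the left spine). -/
def blackHeight : RBTree α → ℕ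
  | leaf => 0
  | node Color.red l _ _ => blackHeight l
  | node Color.black l _ _ => blackHeight l + 1

/-- The color of the root; leaves count as black. -/
def rootColor : RBTree α → Color
  | leaf => Color.black
  | node c _ _ _ => c

/-- In-order traversal. -/
def inorder : RBTree α → List α
  | leaf => []
  | node _ l a r => inorder l ++ a :: inorder r

/-- Number of internal (key-carrying) nodes. -/
def size : RBTree α → ℕ
  | leaf => 0
  | node _ l _ r => size l + 1 + size r

/-- `IsRBT t y n` means `t` is a valid red-black tree with root color `y`
and black height `n`, mirroring the indexed inductive family `irbt`. -/
inductive IsRBT : RBTree α → Color → ℕ → Prop where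
  | leaf : IsRBT leaf Color.black 0
  | red {t₁ t₂ : RBTree α} {n : ℕ} (a : α) :
      IsRBT t₁ Color.black n → IsRBT t₂ Color.black n →
      IsRBT (node Color.red t₁ a t₂) Color.red n
  | black {t₁ t₂ : RBTree α} {y₁ y₂ : Color} {n : ℕ} (a : α) :
      IsRBT t₁ y₁ n → IsRBT t₂ y₂ n →
      IsRBT (node Color.black t₁ a t₂) Color.black (n + 1)

end RBTree
namespace RBTree

/-- The value computed by the recursive `Sum` algorithm: 0 on a leaf, and
`x₁ + a + x₂` on a node with key `a` and recursively-computed sums `x₁`, `x₂`. -/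
def sumVal : RBTree ℕ → ℕ
  | leaf => 0
  | node _ l a r => sumVal l + a + sumVal r

/-- The sequential work of the recursive `Sum` algorithm: one unit of work
per internal node visited. -/
def sumWork : RBTree ℕ → ℕ
  | leaf => 0
  | node _ l _ r => 1 + sumWork l + sumWork r

/-- The parallel span of the recursive `Sum` algorithm: the two recursive
calls at a node run in parallel. -/
def sumSpan : RBTree ℕ → ℕ
  | leaf => 0
  | node _ l _ r => 1 + max (sumSpan l) (sumSpan r)

end RBTree
lemma span_bound_aux {y : Color} {n : ℕ} {t : RBTree ℕ}
    (h : RBTree.IsRBT t y n) :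
    RBTree.sumSpan t ≤ 1 + 2 * n ∧
    (y = Color.black → RBTree.sumSpan t ≤ 2 * n) := by
  induction h with
  | leaf => simp [RBTree.sumSpan]
  | red a h1 h2 ih1 ih2 =>
    refine ⟨?_, by simp⟩
    simp only [RBTree.sumSpan]
    have := ih1.2 rfl
    have := ih2.2 rfl
    omega
  | black a h1 h2 ih1 ih2 =>
    have h1' := ih1.1
    have h2' := ih2.1
    constructor <;> [skip; intro _] <;> · simp only [RBTree.sumSpan]; omega

lemma size_bound {α : Type} {y : Color} {n : ℕ} {t : RBTree α}
    (h : RBTree.IsRBT t y n) : 2 ^ n ≤ 1 + t.size := by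
  induction h with
  | leaf => simp [RBTree.size]
  | red a h1 h2 ih1 ih2 => simp only [RBTree.size]; omega
  | black a h1 h2 ih1 ih2 =>
    simp only [RBTree.size, pow_succ]; omega

/-- **Span of Sum.**  For every red-black tree `t` over the natural numbers
with black height `n` and root color `y`, the parallel span of the recursive
`Sum` algorithm on `t` is at most `1 + 2 * n`, and if the root of `t` is
colored black then the span is at most `2 * n`.  Consequently, the span of
`Sum(t)` is at most `1 + 2 * ⌈log₂ (1 + |t|)⌉`, where `|t|` is the number of
internal nodes of `t`. -/
theorem sum_span_bound {y : Color} {n : ℕ} (t : RBTree ℕ)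
    (h : RBTree.IsRBT t y n) :
    RBTree.sumSpan t ≤ 1 + 2 * n ∧
    (y = Color.black → RBTree.sumSpan t ≤ 2 * n) ∧
    RBTree.sumSpan t ≤ 1 + 2 * Nat.clog 2 (1 + t.size) := by
  obtain ⟨h1, h2⟩ := span_bound_aux h
  refine ⟨h1, h2, ?_⟩
  have hn : n ≤ Nat.clog 2 (1 + t.size) := by
    have := Nat.clog_mono_right 2 (size_bound h)
    rwa [Nat.clog_pow 2 n one_lt_two] at this
  omega
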